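/- In the setting of the previous abstraction: let G be an abelian group with a distinguished submonoid of effective elements, and let D₀, D₀' be two elements such that there exist positive rationals c, c' with cD₀ − D₀' and c'D₀' − D₀ both effective. Then the topologies on G generated by the epsilon-balls B(ε, D₀) and B(ε, D₀') coincide. -/
import Mathlib

open Topology

def effBall {G : Type*} [AddCommGroup G] [Module ℚ G] (Eff : AddSubmonoid G)
    (D₀ : G) (ε : ℚ) : Set G :=
  {E : G | ε • D₀ + E ∈ Eff ∧ ε • D₀ - E ∈ Eff}

def effBallTopology {G : Type*} [AddCommGroup G] [Module ℚ G] (Eff : AddSubmonoid G)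
    (D₀ : G) : TopologicalSpace G :=
  TopologicalSpace.generateFrom
    {S : Set G | ∃ (x : G) (ε : ℚ), 0 < ε ∧ S = (fun y => x + y) '' effBall Eff D₀ ε}

private lemma mem_image_translate {G : Type*} [AddCommGroup G] (S : Set G) (z w : G) :
    w ∈ (fun y => z + y) '' S ↔ w - z ∈ S := by
  constructor
  · rintro ⟨v, hv, rfl⟩; simpa using hv
  · intro h; exact ⟨w - z, h, by show z + (w - z) = w; abel⟩

private lemma ball_open_aux {G : Type*} [AddCommGroup G] [Module ℚ G]
    (Eff : AddSubmonoid G) (D₀ D₀' : G) (c : ℚ) (hc : 0 < c)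
    (h₁ : c • D₀ - D₀' ∈ Eff) (x : G) (ε : ℚ) (hε : 0 < ε) :
    IsOpen[effBallTopology Eff D₀] ((fun y => x + y) '' effBall Eff D₀' ε) := by
  letI := effBallTopology Eff D₀
  rw [isOpen_iff_forall_mem_open]
  intro p hp
  rw [mem_image_translate] at hp
  simp only [effBall, Set.mem_setOf_eq] at hp
  obtain ⟨hp1, hp2⟩ := hp
  -- numerics
  have ht : (0:ℚ) < 2 * ε := by positivity
  set q : ℕ := (2 * ε : ℚ).den with hq_def
  set N : ℕ := (2 * ε : ℚ).num.toNat with hN_def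
  have hnum : (0:ℤ) < (2 * ε : ℚ).num := Rat.num_pos.mpr ht
  have hNZ : ((N : ℤ)) = (2 * ε : ℚ).num := Int.toNat_of_nonneg hnum.le
  have hq : 1 ≤ q := (2 * ε : ℚ).den_pos
  have hden : (((2 * ε : ℚ).den : ℚ)) ≠ 0 := Nat.cast_ne_zero.mpr (2 * ε : ℚ).den_nz
  have hN' : (N:ℚ) = ((2 * ε : ℚ).num:ℚ) := by exact_mod_cast congrArg (Int.cast : ℤ → ℚ) hNZ
  have hNq : (q : ℚ) * (2 * ε) = (N : ℚ) := by
    have h := Rat.num_div_den (2 * ε : ℚ)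
    have h2 := (div_eq_iff hden).mp h
    rw [hN', h2]
    ring
  have hN0 : (0:ℚ) < (N:ℚ) := by
    have : (0:ℤ) < (N:ℤ) := by rw [hNZ]; exact hnum
    exact_mod_cast this
  have hkey : ∀ e f : G, e ∈ Eff → f ∈ Eff → e + f = (2 * ε) • D₀' →
      ((N:ℚ) * c) • D₀ - e ∈ Eff := by
    intro e f he hf hef
    have hm := Eff.add_mem (Eff.add_mem (AddSubmonoid.nsmul_mem Eff h₁ N)
      (AddSubmonoid.nsmul_mem Eff he (q-1))) (AddSubmonoid.nsmul_mem Eff hf q)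
    have hf' : f = (2 * ε) • D₀' - e := by rw [← hef]; abel
    subst hf'
    convert hm using 1
    simp only [← Nat.cast_smul_eq_nsmul ℚ]
    have hq1 : ((q - 1 : ℕ) : ℚ) = (q:ℚ) - 1 := by
      push_cast [hq]; ring
    rw [hq1]
    match_scalars <;> first | ring1 | (linear_combination -hNq)
  have hδ : (0:ℚ) < (N:ℚ) * c / 2 := by positivity
  set δ₁ : ℚ := (N:ℚ) * c / 2 with hδ_def
  have hef : (ε • D₀' + (p - x)) + (ε • D₀' - (p - x)) = (2 * ε) • D₀' := by
    module
  have hkey1 := hkey _ _ hp1 hp2 hef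
  have hkey2 := hkey _ _ hp2 hp1 (by rw [← hef]; abel)
  refine ⟨((fun y => (x - ε • D₀' + δ₁ • D₀) + y) '' effBall Eff D₀ δ₁) ∩
          ((fun y => (x + ε • D₀' - δ₁ • D₀) + y) '' effBall Eff D₀ δ₁), ?_, ?_, ?_⟩
  · rintro w ⟨hw1, hw2⟩
    rw [mem_image_translate] at hw1 hw2
    simp only [effBall, Set.mem_setOf_eq] at hw1 hw2
    rw [mem_image_translate]
    simp only [effBall, Set.mem_setOf_eq]
    constructor
    · convert hw1.1 using 1
      module
    · convert hw2.2 using 1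
      module
  · apply IsOpen.inter
    · exact TopologicalSpace.GenerateOpen.basic _ ⟨x - ε • D₀' + δ₁ • D₀, δ₁, hδ, rfl⟩
    · exact TopologicalSpace.GenerateOpen.basic _ ⟨x + ε • D₀' - δ₁ • D₀, δ₁, hδ, rfl⟩
  · constructor
    · rw [mem_image_translate]
      simp only [effBall, Set.mem_setOf_eq]
      refine ⟨?_, ?_⟩
      · convert hp1 using 1
        module
      · convert hkey1 using 1
        rw [hδ_def]
        module
    · rw [mem_image_translate]
      simp only [effBall, Set.mem_setOf_eq]
      refine ⟨?_, ?_⟩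
      · convert hkey2 using 1
        rw [hδ_def]
        module
      · convert hp2 using 1
        module

/-- The boundary topology does not depend on the choice of boundary divisor:
two boundary divisors dominating each other up to positive rational multiples
generate the same topology. -/
theorem boundary_topology_independent {G : Type*} [AddCommGroup G] [Module ℚ G]
    (Eff : AddSubmonoid G) (D₀ D₀' : G) (c c' : ℚ) (hc : 0 < c) (hc' : 0 < c')
    (h₁ : c • D₀ - D₀' ∈ Eff) (h₂ : c' • D₀' - D₀ ∈ Eff) :
    effBallTopology Eff D₀ = effBallTopology Eff D₀' := by
  refine le_antisymm ?_ ?_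
  · rw [show effBallTopology Eff D₀' = TopologicalSpace.generateFrom
      {S : Set G | ∃ (x : G) (ε : ℚ), 0 < ε ∧ S = (fun y => x + y) '' effBall Eff D₀' ε}
      from rfl]
    refine le_generateFrom ?_
    rintro S ⟨x, ε, hε, rfl⟩
    exact ball_open_aux Eff D₀ D₀' c hc h₁ x ε hε
  · refine le_generateFrom ?_
    rintro S ⟨x, ε, hε, rfl⟩
    exact ball_open_aux Eff D₀' D₀ c' hc' h₂ x ε hε
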